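/- arXiv:0903.1169 — 3 statements merged into one kernel-verified Lean document; each statement's English description precedes it below -/
import Mathlib

section
/- Let A be a (1,1)-tensor field (an endomorphism of the tangent bundle) on a smooth manifold N with A ∘ A = 0 and such that for all vector fields X, Y one has [AX, AY] = A[X, AY] + A[AX, Y] (vanishing Nijenhuis tensor combined with A² = 0). Then the induced exterior derivative d_A := i_A ∘ d − d ∘ i_A on differential forms satisfies d_A ∘ d_A = 0. -/
/- We model the smooth manifold `N` by a normed real vector space `F` (a chart model);
vector fields are maps `F → F`, `k`-forms are alternating functionals of `k` vector
fields, given in the case of `1`-forms by a field of continuous linear functionals.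
A `(1,1)`-tensor field is a field `A : F → (F →L[ℝ] F)` of endomorphisms. -/

noncomputable section

variable {F : Type*} [NormedAddCommGroup F] [NormedSpace ℝ F]

/-- Lie bracket of vector fields: `[X,Y] = DY·X − DX·Y`. -/
def lieF (X Y : F → F) : F → F := fun p => fderiv ℝ Y p (X p) - fderiv ℝ X p (Y p)

/-- Pointwise application of a (1,1)-tensor to a vector field: `A·X`. -/
def appF (A : F → F →L[ℝ] F) (X : F → F) : F → F := fun p => A p (X p)

/-- Action of a vector field on a function: `X(g)`. -/
def actF (X : F → F) (g : F → ℝ) : F → ℝ := fun p => fderiv ℝ g p (X p)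

/-- Exterior derivative of a `1`-form (given as a functional on vector fields):
`dω(X,Y) = X(ω(Y)) − Y(ω(X)) − ω([X,Y])`. -/
def dOne (ω : (F → F) → (F → ℝ)) (X Y : F → F) : F → ℝ :=
  actF X (ω Y) - actF Y (ω X) - ω (lieF X Y)

/-- Exterior derivative of a `2`-form (given as a bi-functional on vector fields). -/
def dTwo (T : (F → F) → (F → F) → (F → ℝ)) (X Y Z : F → F) : F → ℝ :=
  actF X (T Y Z) - actF Y (T X Z) + actF Z (T X Y)
    - T (lieF X Y) Z + T (lieF X Z) Y - T (lieF Y Z) X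

/-- Inner product `i_A` of a (1,1)-tensor with a `1`-form. -/
def iAOne (A : F → F →L[ℝ] F) (ω : (F → F) → (F → ℝ)) (X : F → F) : F → ℝ :=
  ω (appF A X)

/-- Inner product `i_A` of a (1,1)-tensor with a `2`-form. -/
def iATwo (A : F → F →L[ℝ] F) (T : (F → F) → (F → F) → (F → ℝ)) (X Y : F → F) : F → ℝ :=
  T (appF A X) Y + T X (appF A Y)

/-- Inner product `i_A` of a (1,1)-tensor with a `3`-form. -/
def iAThree (A : F → F →L[ℝ] F) (U : (F → F) → (F → F) → (F → F) → (F → ℝ))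
    (X Y Z : F → F) : F → ℝ :=
  U (appF A X) Y Z + U X (appF A Y) Z + U X Y (appF A Z)

/-- `d_A` on `0`-forms: since `i_A g = 0`, `d_A g = i_A (dg)`, i.e. `(d_A g)(X) = dg(AX)`. -/
def dAZero (A : F → F →L[ℝ] F) (g : F → ℝ) (X : F → F) : F → ℝ := actF (appF A X) g

/-- `d_A = i_A ∘ d − d ∘ i_A` on `1`-forms. -/
def dAOne (A : F → F →L[ℝ] F) (ω : (F → F) → (F → ℝ)) (X Y : F → F) : F → ℝ :=
  iATwo A (dOne ω) X Y - dOne (iAOne A ω) X Y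

/-- `d_A = i_A ∘ d − d ∘ i_A` on `2`-forms. -/
def dATwo (A : F → F →L[ℝ] F) (T : (F → F) → (F → F) → (F → ℝ)) (X Y Z : F → F) : F → ℝ :=
  iAThree A (dTwo T) X Y Z - dTwo (iATwo A T) X Y Z

/-- A smooth `1`-form, given by a field of linear functionals, evaluated on vector fields. -/
def evalOne (ω : F → F →L[ℝ] ℝ) (X : F → F) : F → ℝ := fun p => ω p (X p)


/-! ### Auxiliary lemmas -/

section Aux

lemma sm_fd {G : Type*} [NormedAddCommGroup G] [NormedSpace ℝ G]
    {f : F → G} (hf : ContDiff ℝ (⊤ : ℕ∞) f) {X : F → F} (hX : ContDiff ℝ (⊤ : ℕ∞) X) :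
    ContDiff ℝ (⊤ : ℕ∞) (fun p => fderiv ℝ f p (X p)) :=
  (hf.fderiv_right (by simp)).clm_apply hX
lemma sm_lieF {X Y : F → F} (hX : ContDiff ℝ (⊤ : ℕ∞) X) (hY : ContDiff ℝ (⊤ : ℕ∞) Y) :
    ContDiff ℝ (⊤ : ℕ∞) (lieF X Y) := (sm_fd hY hX).sub (sm_fd hX hY)
lemma sm_appF {A : F → F →L[ℝ] F} (hA : ContDiff ℝ (⊤ : ℕ∞) A) {X : F → F} (hX : ContDiff ℝ (⊤ : ℕ∞) X) :
    ContDiff ℝ (⊤ : ℕ∞) (appF A X) := hA.clm_apply hX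
lemma sm_evalOne {ω : F → F →L[ℝ] ℝ} (hω : ContDiff ℝ (⊤ : ℕ∞) ω) {X : F → F} (hX : ContDiff ℝ (⊤ : ℕ∞) X) :
    ContDiff ℝ (⊤ : ℕ∞) (evalOne ω X) := hω.clm_apply hX
lemma sm_actF {X : F → F} (hX : ContDiff ℝ (⊤ : ℕ∞) X) {g : F → ℝ} (hg : ContDiff ℝ (⊤ : ℕ∞) g) :
    ContDiff ℝ (⊤ : ℕ∞) (actF X g) := sm_fd hg hX
lemma dAt {G : Type*} [NormedAddCommGroup G] [NormedSpace ℝ G]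
    {f : F → G} (hf : ContDiff ℝ (⊤ : ℕ∞) f) (p : F) : DifferentiableAt ℝ f p :=
  (hf.differentiable (by simp)).differentiableAt
lemma dAt_fd {G : Type*} [NormedAddCommGroup G] [NormedSpace ℝ G]
    {f : F → G} (hf : ContDiff ℝ (⊤ : ℕ∞) f) (p : F) : DifferentiableAt ℝ (fderiv ℝ f) p :=
  dAt (hf.fderiv_right (by simp)) p
lemma symm2 {G : Type*} [NormedAddCommGroup G] [NormedSpace ℝ G]
    {f : F → G} (hf : ContDiff ℝ (⊤ : ℕ∞) f) (p v w : F) :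
    fderiv ℝ (fderiv ℝ f) p v w = fderiv ℝ (fderiv ℝ f) p w v :=
  (hf.contDiffAt.isSymmSndFDerivAt (by simp; exact (WithTop.coe_le_coe.mpr (le_top : (2:ℕ∞) ≤ ⊤) : ((2:ℕ∞) : WithTop ℕ∞) ≤ ((⊤:ℕ∞) : WithTop ℕ∞)))) v w

lemma fd_eval {G : Type*} [NormedAddCommGroup G] [NormedSpace ℝ G]
    {φ : F → F →L[ℝ] G} {X : F → F} {p : F} (hφ : DifferentiableAt ℝ φ p)
    (hX : DifferentiableAt ℝ X p) (u : F) :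
    fderiv ℝ (fun q => φ q (X q)) p u = fderiv ℝ φ p u (X p) + φ p (fderiv ℝ X p u) := by
  rw [fderiv_clm_apply hφ hX]; simp [add_comm]

/-- Commutator of the derivations attached to two vector fields. -/
lemma actF_comm {f : F → ℝ} (hf : ContDiff ℝ (⊤ : ℕ∞) f) {U V : F → F}
    (hU : ContDiff ℝ (⊤ : ℕ∞) U) (hV : ContDiff ℝ (⊤ : ℕ∞) V) (p : F) :
    actF U (actF V f) p - actF V (actF U f) p = actF (lieF U V) f p := by
  have h1 : actF U (actF V f) p
      = fderiv ℝ (fderiv ℝ f) p (U p) (V p) + fderiv ℝ f p (fderiv ℝ V p (U p)) :=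
    fd_eval (dAt_fd hf p) (dAt hV p) (U p)
  have h2 : actF V (actF U f) p
      = fderiv ℝ (fderiv ℝ f) p (V p) (U p) + fderiv ℝ f p (fderiv ℝ U p (V p)) :=
    fd_eval (dAt_fd hf p) (dAt hU p) (V p)
  have h3 := symm2 hf p (U p) (V p)
  rw [h1, h2]
  show _ = fderiv ℝ f p (lieF U V p)
  simp only [lieF, map_sub]
  linarith

lemma fd_lieF {U V : F → F} (hU : ContDiff ℝ (⊤ : ℕ∞) U) (hV : ContDiff ℝ (⊤ : ℕ∞) V) (p w : F) :
    fderiv ℝ (lieF U V) p w =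
      fderiv ℝ (fderiv ℝ V) p w (U p) + fderiv ℝ V p (fderiv ℝ U p w)
      - (fderiv ℝ (fderiv ℝ U) p w (V p) + fderiv ℝ U p (fderiv ℝ V p w)) := by
  have d1 : DifferentiableAt ℝ (fun q => fderiv ℝ V q (U q)) p :=
    (dAt_fd hV p).clm_apply (dAt hU p)
  have d2 : DifferentiableAt ℝ (fun q => fderiv ℝ U q (V q)) p :=
    (dAt_fd hU p).clm_apply (dAt hV p)
  have : lieF U V = fun q => fderiv ℝ V q (U q) - fderiv ℝ U q (V q) := rfl
  rw [this, fderiv_fun_sub d1 d2, ContinuousLinearMap.sub_apply,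
    fd_eval (dAt_fd hV p) (dAt hU p) w, fd_eval (dAt_fd hU p) (dAt hV p) w]

/-- Jacobi identity for the Lie bracket of vector fields. -/
lemma lieF_jacobi {U V W : F → F} (hU : ContDiff ℝ (⊤ : ℕ∞) U) (hV : ContDiff ℝ (⊤ : ℕ∞) V)
    (hW : ContDiff ℝ (⊤ : ℕ∞) W) (p : F) :
    lieF (lieF U V) W p = lieF (lieF U W) V p - lieF (lieF V W) U p := by
  have e1 : lieF (lieF U V) W p = fderiv ℝ W p (lieF U V p) - fderiv ℝ (lieF U V) p (W p) := rfl
  have e2 : lieF (lieF U W) V p = fderiv ℝ V p (lieF U W p) - fderiv ℝ (lieF U W) p (V p) := rfl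
  have e3 : lieF (lieF V W) U p = fderiv ℝ U p (lieF V W p) - fderiv ℝ (lieF V W) p (U p) := rfl
  have sU := symm2 hU p (W p) (V p)
  have sV := symm2 hV p (W p) (U p)
  have sW := symm2 hW p (V p) (U p)
  rw [e1, e2, e3, fd_lieF hU hV p (W p), fd_lieF hU hW p (V p), fd_lieF hV hW p (U p)]
  simp only [lieF, map_sub]
  rw [sU, sV, sW]
  abel

lemma lieF_zero_left {W : F → F} (p : F) : lieF (fun _ => (0:F)) W p = 0 := by
  simp [lieF]

lemma lieF_sub_left {f g W : F → F} (hf : ContDiff ℝ (⊤ : ℕ∞) f) (hg : ContDiff ℝ (⊤ : ℕ∞) g) (p : F) :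
    lieF (fun q => f q - g q) W p = lieF f W p - lieF g W p := by
  unfold lieF
  rw [fderiv_fun_sub (dAt hf p) (dAt hg p)]
  simp only [map_sub, ContinuousLinearMap.sub_apply]
  abel

/-- The deformed bracket `[X,Y]_A = [AX,Y] + [X,AY] - A[X,Y]`. -/
def braA (A : F → F →L[ℝ] F) (X Y : F → F) : F → F :=
  lieF (appF A X) Y + lieF X (appF A Y) - appF A (lieF X Y)

lemma braA_apply {A : F → F →L[ℝ] F} {X Y : F → F} (p : F) :
    braA A X Y p = lieF (appF A X) Y p + lieF X (appF A Y) p - A p (lieF X Y p) := rfl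

lemma braA_apply' {A : F → F →L[ℝ] F} {X Y : F → F} (p : F) :
    braA A X Y p = lieF (appF A X) Y p + lieF X (appF A Y) p - appF A (lieF X Y) p := rfl

lemma actF_pi_sub {f g : F → ℝ} {p : F} (hf : DifferentiableAt ℝ f p)
    (hg : DifferentiableAt ℝ g p) (U : F → F) :
    actF U (f - g) p = actF U f p - actF U g p := by
  unfold actF
  rw [fderiv_sub hf hg, ContinuousLinearMap.sub_apply]

lemma actF_pi_add {f g : F → ℝ} {p : F} (hf : DifferentiableAt ℝ f p)
    (hg : DifferentiableAt ℝ g p) (U : F → F) :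
    actF U (f + g) p = actF U f p + actF U g p := by
  unfold actF
  rw [fderiv_add hf hg, ContinuousLinearMap.add_apply]

/-- The fundamental formula for `d_A` of a pointwise 1-form. -/
lemma tau_fun (A : F → F →L[ℝ] F) (ω : F → F →L[ℝ] ℝ) (V W : F → F) :
    dAOne A (evalOne ω) V W
      = actF (appF A V) (evalOne ω W) - actF (appF A W) (evalOne ω V)
        - evalOne ω (lieF (appF A V) W) - evalOne ω (lieF V (appF A W))
        + evalOne ω (appF A (lieF V W)) := by
  funext p
  simp only [dAOne, iATwo, dOne, iAOne, Pi.sub_apply, Pi.add_apply, evalOne, appF, map_sub]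
  ring

lemma tau_eq' (A : F → F →L[ℝ] F) (ω : F → F →L[ℝ] ℝ) (V W : F → F) (p : F) :
    dAOne A (evalOne ω) V W p
      = actF (appF A V) (evalOne ω W) p - actF (appF A W) (evalOne ω V) p
        - evalOne ω (lieF (appF A V) W) p - evalOne ω (lieF V (appF A W)) p
        + evalOne ω (appF A (lieF V W)) p := by
  rw [tau_fun]; rfl

lemma sm_dAOne {A : F → F →L[ℝ] F} (hA : ContDiff ℝ (⊤ : ℕ∞) A) {ω : F → F →L[ℝ] ℝ}
    (hω : ContDiff ℝ (⊤ : ℕ∞) ω) {V W : F → F} (hV : ContDiff ℝ (⊤ : ℕ∞) V) (hW : ContDiff ℝ (⊤ : ℕ∞) W) :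
    ContDiff ℝ (⊤ : ℕ∞) (dAOne A (evalOne ω) V W) := by
  rw [tau_fun]
  exact ((((sm_actF (sm_appF hA hV) (sm_evalOne hω hW)).sub
    (sm_actF (sm_appF hA hW) (sm_evalOne hω hV))).sub
    (sm_evalOne hω (sm_lieF (sm_appF hA hV) hW))).sub
    (sm_evalOne hω (sm_lieF hV (sm_appF hA hW)))).add
    (sm_evalOne hω (sm_appF hA (sm_lieF hV hW)))

lemma braA_eval {A : F → F →L[ℝ] F} (ω : F → F →L[ℝ] ℝ) (u W : F → F) (p : F) :
    evalOne ω (braA A u W) p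
      = evalOne ω (lieF (appF A u) W) p + evalOne ω (lieF u (appF A W)) p
        - evalOne ω (appF A (lieF u W)) p := by
  simp only [evalOne, braA_apply', map_add, map_sub]

section Main

variable {A : F → F →L[ℝ] F} (hA : ContDiff ℝ (⊤ : ℕ∞) A)
  (hA2 : ∀ p : F, (A p).comp (A p) = 0)
  (hNij : ∀ X Y : F → F, ContDiff ℝ (⊤ : ℕ∞) X → ContDiff ℝ (⊤ : ℕ∞) Y → ∀ p : F,
      lieF (appF A X) (appF A Y) p
        = A p (lieF X (appF A Y) p) + A p (lieF (appF A X) Y p))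

include hA2 in
lemma AA_zero (V : F → F) : appF A (appF A V) = fun _ => (0:F) := by
  funext q
  have := congrArg (fun (L : F →L[ℝ] F) => L (V q)) (hA2 q)
  simpa [appF] using this

set_option linter.unusedSectionVars false in
include hA hA2 hNij in
lemma lie_app_split {X Y : F → F} (hX : ContDiff ℝ (⊤ : ℕ∞) X) (hY : ContDiff ℝ (⊤ : ℕ∞) Y)
    (W : F → F) (p : F) :
    lieF (appF A (lieF (appF A X) Y)) W p
      = lieF (lieF (appF A X) (appF A Y)) W p - lieF (appF A (lieF X (appF A Y))) W p := by
  have hfun : appF A (lieF (appF A X) Y)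
      = fun q => lieF (appF A X) (appF A Y) q - appF A (lieF X (appF A Y)) q := by
    funext q
    have h := hNij X Y hX hY q
    simp only [appF]
    rw [h]
    abel
  rw [hfun, lieF_sub_left (sm_lieF (sm_appF hA hX) (sm_appF hA hY))
    (sm_appF hA (sm_lieF hX (sm_appF hA hY))) p]

include hA hA2 hNij in
/-- Jacobi-type identity for the deformed bracket, in expanded form. -/
lemma braA_jacobi {X Y Z : F → F} (hX : ContDiff ℝ (⊤ : ℕ∞) X) (hY : ContDiff ℝ (⊤ : ℕ∞) Y)
    (hZ : ContDiff ℝ (⊤ : ℕ∞) Z) (p : F) :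
    braA A (lieF (appF A X) Y) Z p + braA A (lieF X (appF A Y)) Z p
      - braA A (appF A (lieF X Y)) Z p
      - braA A (lieF (appF A X) Z) Y p - braA A (lieF X (appF A Z)) Y p
      + braA A (appF A (lieF X Z)) Y p
      + braA A (lieF (appF A Y) Z) X p + braA A (lieF Y (appF A Z)) X p
      - braA A (appF A (lieF Y Z)) X p = 0 := by
  have aX := sm_appF hA hX
  have aY := sm_appF hA hY
  have aZ := sm_appF hA hZ
  simp only [braA_apply]
  rw [AA_zero hA2 (lieF X Y), AA_zero hA2 (lieF X Z), AA_zero hA2 (lieF Y Z),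
      lieF_zero_left, lieF_zero_left, lieF_zero_left,
      lie_app_split hA hA2 hNij hX hY Z p, lie_app_split hA hA2 hNij hX hZ Y p,
      lie_app_split hA hA2 hNij hY hZ X p,
      hNij (lieF X Y) Z (sm_lieF hX hY) hZ p,
      hNij (lieF X Z) Y (sm_lieF hX hZ) hY p,
      hNij (lieF Y Z) X (sm_lieF hY hZ) hX p,
      lieF_jacobi aX aY hZ p, lieF_jacobi aX hY aZ p, lieF_jacobi hX aY aZ p,
      lieF_jacobi aX hY hZ p, lieF_jacobi hX aY hZ p, lieF_jacobi hX hY aZ p]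
  simp only [map_sub]
  abel

include hA2 hNij in
lemma DA_combine {X Y : F → F} (hX : ContDiff ℝ (⊤ : ℕ∞) X) (hY : ContDiff ℝ (⊤ : ℕ∞) Y)
    (g : F → ℝ) (p : F) :
    actF (appF A (lieF (appF A X) Y)) g p + actF (appF A (lieF X (appF A Y))) g p
      - actF (appF A (appF A (lieF X Y))) g p
      = actF (lieF (appF A X) (appF A Y)) g p := by
  have hAA : A p (A p (lieF X Y p)) = 0 := by
    have := congrArg (fun (L : F →L[ℝ] F) => L (lieF X Y p)) (hA2 p)
    simpa using this
  simp only [actF, appF, ← map_add, ← map_sub]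
  congr 1
  rw [hNij X Y hX hY p, map_sub, map_add, hAA]
  abel

include hA in
lemma actF_dAOne {ω : F → F →L[ℝ] ℝ} (hω : ContDiff ℝ (⊤ : ℕ∞) ω) {V W : F → F}
    (hV : ContDiff ℝ (⊤ : ℕ∞) V) (hW : ContDiff ℝ (⊤ : ℕ∞) W) (U : F → F) (p : F) :
    actF U (dAOne A (evalOne ω) V W) p
      = actF U (actF (appF A V) (evalOne ω W)) p - actF U (actF (appF A W) (evalOne ω V)) p
        - actF U (evalOne ω (lieF (appF A V) W)) p - actF U (evalOne ω (lieF V (appF A W))) p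
        + actF U (evalOne ω (appF A (lieF V W))) p := by
  have da : DifferentiableAt ℝ (actF (appF A V) (evalOne ω W)) p :=
    dAt (sm_actF (sm_appF hA hV) (sm_evalOne hω hW)) p
  have db : DifferentiableAt ℝ (actF (appF A W) (evalOne ω V)) p :=
    dAt (sm_actF (sm_appF hA hW) (sm_evalOne hω hV)) p
  have dc : DifferentiableAt ℝ (evalOne ω (lieF (appF A V) W)) p :=
    dAt (sm_evalOne hω (sm_lieF (sm_appF hA hV) hW)) p
  have dd : DifferentiableAt ℝ (evalOne ω (lieF V (appF A W))) p :=
    dAt (sm_evalOne hω (sm_lieF hV (sm_appF hA hW))) p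
  have de : DifferentiableAt ℝ (evalOne ω (appF A (lieF V W))) p :=
    dAt (sm_evalOne hω (sm_appF hA (sm_lieF hV hW))) p
  have S1 : DifferentiableAt ℝ
      (actF (appF A V) (evalOne ω W) - actF (appF A W) (evalOne ω V)) p := da.sub db
  have S2 : DifferentiableAt ℝ
      (actF (appF A V) (evalOne ω W) - actF (appF A W) (evalOne ω V)
        - evalOne ω (lieF (appF A V) W)) p := S1.sub dc
  have S3 : DifferentiableAt ℝ
      (actF (appF A V) (evalOne ω W) - actF (appF A W) (evalOne ω V)
        - evalOne ω (lieF (appF A V) W) - evalOne ω (lieF V (appF A W))) p := S2.sub dd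
  rw [tau_fun, actF_pi_add S3 de U, actF_pi_sub S2 dd U, actF_pi_sub S1 dc U,
      actF_pi_sub da db U]

end Main
end Aux

/-- If `A` is a smooth (1,1)-tensor field with `A ∘ A = 0` and vanishing Nijenhuis tensor
(equivalently, `[AX,AY] = A[X,AY] + A[AX,Y]` for all vector fields `X, Y`), then the
derivation `d_A = i_A ∘ d − d ∘ i_A` satisfies `d_A ∘ d_A = 0` on differential forms
(stated here on `0`-forms and on `1`-forms, which generate the algebra of forms). -/
theorem dA_squared_zero (A : F → F →L[ℝ] F) (hA : ContDiff ℝ (⊤ : ℕ∞) A)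
    (hA2 : ∀ p : F, (A p).comp (A p) = 0)
    (hNij : ∀ X Y : F → F, ContDiff ℝ (⊤ : ℕ∞) X → ContDiff ℝ (⊤ : ℕ∞) Y → ∀ p : F,
      lieF (appF A X) (appF A Y) p
        = A p (lieF X (appF A Y) p) + A p (lieF (appF A X) Y p)) :
    (∀ g : F → ℝ, ContDiff ℝ (⊤ : ℕ∞) g → ∀ X Y : F → F, ContDiff ℝ (⊤ : ℕ∞) X → ContDiff ℝ (⊤ : ℕ∞) Y →
      ∀ p : F, dAOne A (dAZero A g) X Y p = 0) ∧
    (∀ ω : F → F →L[ℝ] ℝ, ContDiff ℝ (⊤ : ℕ∞) ω →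
      ∀ X Y Z : F → F, ContDiff ℝ (⊤ : ℕ∞) X → ContDiff ℝ (⊤ : ℕ∞) Y → ContDiff ℝ (⊤ : ℕ∞) Z →
      ∀ p : F, dATwo A (dAOne A (evalOne ω)) X Y Z p = 0) := by
  constructor
  · -- `d_A (d_A g) = 0` on 0-forms
    intro g hg X Y hX hY p
    simp only [dAOne, iATwo, dOne, iAOne, dAZero, Pi.sub_apply, Pi.add_apply]
    have h0 : ∀ V : F → F, actF (appF A (appF A V)) g = (fun _ => (0:ℝ)) := by
      intro V
      rw [AA_zero hA2 V]
      funext q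
      simp [actF]
    have hcz : ∀ U : F → F, actF U (fun _ => (0:ℝ)) p = 0 := by
      intro U; simp [actF]
    have z1 : actF Y (actF (appF A (appF A X)) g) p = 0 := by rw [h0 X]; exact hcz Y
    have z2 : actF X (actF (appF A (appF A Y)) g) p = 0 := by rw [h0 Y]; exact hcz X
    have z3 : actF (appF A (appF A (lieF X Y))) g p = 0 := by rw [h0 (lieF X Y)]
    have hcm := actF_comm hg (sm_appF hA hX) (sm_appF hA hY) p
    have hD := DA_combine hA2 hNij hX hY g p
    linarith [z1, z2, z3, hcm, hD]
  · -- `d_A (d_A ω) = 0` on 1-forms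
    intro ω hω X Y Z hX hY hZ p
    have aX := sm_appF hA hX
    have aY := sm_appF hA hY
    have aZ := sm_appF hA hZ
    simp only [dATwo, iAThree, dTwo, iATwo, Pi.sub_apply, Pi.add_apply]
    have d1 : DifferentiableAt ℝ (dAOne A (evalOne ω) (appF A X) Z) p :=
      dAt (sm_dAOne hA hω aX hZ) p
    have d2 : DifferentiableAt ℝ (dAOne A (evalOne ω) (appF A X) Y) p :=
      dAt (sm_dAOne hA hω aX hY) p
    have d3 : DifferentiableAt ℝ (dAOne A (evalOne ω) (appF A Y) Z) p :=
      dAt (sm_dAOne hA hω aY hZ) p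
    have d4 : DifferentiableAt ℝ (dAOne A (evalOne ω) X (appF A Y)) p :=
      dAt (sm_dAOne hA hω hX aY) p
    have d5 : DifferentiableAt ℝ (dAOne A (evalOne ω) X (appF A Z)) p :=
      dAt (sm_dAOne hA hω hX aZ) p
    have d6 : DifferentiableAt ℝ (dAOne A (evalOne ω) Y (appF A Z)) p :=
      dAt (sm_dAOne hA hω hY aZ) p
    have hs1 : actF X (dAOne A (evalOne ω) (appF A Y) Z + dAOne A (evalOne ω) Y (appF A Z)) p
        = actF X (dAOne A (evalOne ω) (appF A Y) Z) p
          + actF X (dAOne A (evalOne ω) Y (appF A Z)) p := actF_pi_add d3 d6 X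
    have hs2 : actF Y (dAOne A (evalOne ω) (appF A X) Z + dAOne A (evalOne ω) X (appF A Z)) p
        = actF Y (dAOne A (evalOne ω) (appF A X) Z) p
          + actF Y (dAOne A (evalOne ω) X (appF A Z)) p := actF_pi_add d1 d5 Y
    have hs3 : actF Z (dAOne A (evalOne ω) (appF A X) Y + dAOne A (evalOne ω) X (appF A Y)) p
        = actF Z (dAOne A (evalOne ω) (appF A X) Y) p
          + actF Z (dAOne A (evalOne ω) X (appF A Y)) p := actF_pi_add d2 d4 Z
    have hH1 := actF_dAOne hA hω hY hZ (appF A X) p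
    have hH2 := actF_dAOne hA hω hX hZ (appF A Y) p
    have hH3 := actF_dAOne hA hω hX hY (appF A Z) p
    have ht1 := tau_eq' A ω (lieF (appF A X) Y) Z p
    have ht2 := tau_eq' A ω (lieF X (appF A Y)) Z p
    have ht3 := tau_eq' A ω (appF A (lieF X Y)) Z p
    have ht4 := tau_eq' A ω (lieF (appF A X) Z) Y p
    have ht5 := tau_eq' A ω (lieF X (appF A Z)) Y p
    have ht6 := tau_eq' A ω (appF A (lieF X Z)) Y p
    have ht7 := tau_eq' A ω (lieF (appF A Y) Z) X p
    have ht8 := tau_eq' A ω (lieF Y (appF A Z)) X p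
    have ht9 := tau_eq' A ω (appF A (lieF Y Z)) X p
    have hD1 := DA_combine hA2 hNij hX hY (evalOne ω Z) p
    have hD2 := DA_combine hA2 hNij hX hZ (evalOne ω Y) p
    have hD3 := DA_combine hA2 hNij hY hZ (evalOne ω X) p
    have hc1 := actF_comm (sm_evalOne hω hZ) aX aY p
    have hc2 := actF_comm (sm_evalOne hω hY) aX aZ p
    have hc3 := actF_comm (sm_evalOne hω hX) aY aZ p
    have hb1 := braA_eval (A := A) ω (lieF (appF A X) Y) Z p
    have hb2 := braA_eval (A := A) ω (lieF X (appF A Y)) Z p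
    have hb3 := braA_eval (A := A) ω (appF A (lieF X Y)) Z p
    have hb4 := braA_eval (A := A) ω (lieF (appF A X) Z) Y p
    have hb5 := braA_eval (A := A) ω (lieF X (appF A Z)) Y p
    have hb6 := braA_eval (A := A) ω (appF A (lieF X Z)) Y p
    have hb7 := braA_eval (A := A) ω (lieF (appF A Y) Z) X p
    have hb8 := braA_eval (A := A) ω (lieF Y (appF A Z)) X p
    have hb9 := braA_eval (A := A) ω (appF A (lieF Y Z)) X p
    have hK4 : evalOne ω (braA A (lieF (appF A X) Y) Z) p
        + evalOne ω (braA A (lieF X (appF A Y)) Z) p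
        - evalOne ω (braA A (appF A (lieF X Y)) Z) p
        - evalOne ω (braA A (lieF (appF A X) Z) Y) p
        - evalOne ω (braA A (lieF X (appF A Z)) Y) p
        + evalOne ω (braA A (appF A (lieF X Z)) Y) p
        + evalOne ω (braA A (lieF (appF A Y) Z) X) p
        + evalOne ω (braA A (lieF Y (appF A Z)) X) p
        - evalOne ω (braA A (appF A (lieF Y Z)) X) p = 0 := by
      simpa only [evalOne, map_add, map_sub, map_zero]
        using congrArg (ω p) (braA_jacobi hA hA2 hNij hX hY hZ p)
    linarith [hs1, hs2, hs3, hH1, hH2, hH3, ht1, ht2, ht3, ht4, ht5, ht6, ht7, ht8, ht9,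
      hD1, hD2, hD3, hc1, hc2, hc3, hb1, hb2, hb3, hb4, hb5, hb6, hb7, hb8, hb9, hK4]

end
end

section
/- Let S be a semispray on M, i.e. a vector field on TM \ {0} with JS = C. Define h = (1/2)(Id − L_S J) and v = (1/2)(Id + L_S J). Then h and v are complementary projectors: h² = h, v² = v, h ∘ v = v ∘ h = 0, and h + v = Id. -/
/- We work in induced coordinates on the tangent bundle `TM` of an `n`-dimensional
manifold: points of `TM` are pairs `p = (x, y) ∈ ℝⁿ × ℝⁿ`, the slit tangent bundle
`TM \ {0}` is `{p | p.2 ≠ 0}`, vector fields are maps `X : ℝⁿ × ℝⁿ → ℝⁿ × ℝⁿ`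
(components in the frame `∂/∂xⁱ, ∂/∂yⁱ`), and the canonical tangent structure acts
pointwise by `J(a,b) = (0,a)`. -/

noncomputable section

/-- Coordinate model of `TM`. -/
abbrev TB (n : ℕ) := (Fin n → ℝ) × (Fin n → ℝ)

/-- The slit tangent bundle `TM \ {0}`. -/
def Slit (n : ℕ) : Set (TB n) := {p | p.2 ≠ 0}

/-- Lie bracket of vector fields: `[X,Y] = DY·X − DX·Y`. -/
def lie {n : ℕ} (X Y : TB n → TB n) : TB n → TB n :=
  fun p => fderiv ℝ Y p (X p) - fderiv ℝ X p (Y p)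

/-- The canonical tangent structure `J = (∂/∂yⁱ) ⊗ dxⁱ` acting on vector fields. -/
def Jop {n : ℕ} (X : TB n → TB n) : TB n → TB n := fun p => (0, (X p).1)

/-- The Liouville (dilation) vector field `C = yⁱ ∂/∂yⁱ`. -/
def LiouvilleVF {n : ℕ} : TB n → TB n := fun p => (0, p.2)

/-- The semispray with coefficients `Gⁱ`: `S = yⁱ ∂/∂xⁱ − 2Gⁱ ∂/∂yⁱ`. -/
def semispray {n : ℕ} (G : TB n → (Fin n → ℝ)) : TB n → TB n :=
  fun p => (p.2, -(2 • G p))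

/-- The Lie derivative `L_S J`, acting on a vector field by `(L_S J)X = [S,JX] − J[S,X]`. -/
def LSJ {n : ℕ} (S X : TB n → TB n) : TB n → TB n := lie S (Jop X) - Jop (lie S X)

/-- The horizontal projector `h = (1/2)(Id − L_S J)` of a semispray `S`. -/
def hop {n : ℕ} (S X : TB n → TB n) : TB n → TB n := (1/2 : ℝ) • (X - LSJ S X)

/-- The vertical projector `v = (1/2)(Id + L_S J)` of a semispray `S`. -/
def vop {n : ℕ} (S X : TB n → TB n) : TB n → TB n := (1/2 : ℝ) • (X + LSJ S X)

open ContinuousLinearMap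

lemma fderiv_semispray {n : ℕ} (G : TB n → (Fin n → ℝ)) (p : TB n)
    (hG : DifferentiableAt ℝ G p) :
    fderiv ℝ (semispray G) p
      = (ContinuousLinearMap.snd ℝ (Fin n → ℝ) (Fin n → ℝ)).prod (-(2 • fderiv ℝ G p)) := by
  apply HasFDerivAt.fderiv
  exact HasFDerivAt.prodMk (hasFDerivAt_snd) ((hG.hasFDerivAt.const_smul (2:ℕ)).neg)

lemma fderiv_Jop {n : ℕ} (X : TB n → TB n) (p : TB n)
    (hX : DifferentiableAt ℝ X p) :
    fderiv ℝ (Jop X) p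
      = (0 : TB n →L[ℝ] (Fin n → ℝ)).prod ((ContinuousLinearMap.fst ℝ (Fin n → ℝ) (Fin n → ℝ)).comp (fderiv ℝ X p)) := by
  apply HasFDerivAt.fderiv
  exact HasFDerivAt.prodMk (hasFDerivAt_const _ _) (hX.hasFDerivAt.fst)

lemma LSJ_apply {n : ℕ} (G : TB n → (Fin n → ℝ)) (X : TB n → TB n) (p : TB n)
    (hG : DifferentiableAt ℝ G p) (hX : DifferentiableAt ℝ X p) :
    LSJ (semispray G) X p
      = (-(X p).1, (X p).2 + 2 • fderiv ℝ G p (0, (X p).1)) := by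
  have h1 := fderiv_semispray G p hG
  have h2 := fderiv_Jop X p hX
  simp only [LSJ, lie, Jop, Pi.sub_apply, h1, h2, semispray]
  ext i <;>
  simp [Prod.ext_iff, prod_apply, coe_snd', coe_fst', comp_apply, neg_apply, smul_apply] <;>
  abel

lemma half_two_smul {n : ℕ} (c : Fin n → ℝ) : (1/2 : ℝ) • ((2:ℕ) • c) = c := by
  rw [← Nat.cast_smul_eq_nsmul ℝ, smul_smul]; norm_num

lemma hop_apply {n : ℕ} (G : TB n → (Fin n → ℝ)) (X : TB n → TB n) (p : TB n)
    (hG : DifferentiableAt ℝ G p) (hX : DifferentiableAt ℝ X p) :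
    hop (semispray G) X p = ((X p).1, -(fderiv ℝ G p (0, (X p).1))) := by
  simp only [hop, Pi.smul_apply, Pi.sub_apply, LSJ_apply G X p hG hX]
  have : X p - (-(X p).1, (X p).2 + 2 • fderiv ℝ G p (0, (X p).1))
      = ((2:ℕ) • (X p).1, -((2:ℕ) • fderiv ℝ G p (0, (X p).1))) := by
    ext i <;> simp [two_smul] <;> abel
  rw [this, Prod.smul_mk, half_two_smul, smul_neg, half_two_smul]

lemma vop_apply {n : ℕ} (G : TB n → (Fin n → ℝ)) (X : TB n → TB n) (p : TB n)
    (hG : DifferentiableAt ℝ G p) (hX : DifferentiableAt ℝ X p) :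
    vop (semispray G) X p = (0, (X p).2 + fderiv ℝ G p (0, (X p).1)) := by
  simp only [vop, Pi.smul_apply, Pi.add_apply, LSJ_apply G X p hG hX]
  have : X p + (-(X p).1, (X p).2 + 2 • fderiv ℝ G p (0, (X p).1))
      = ((0 : Fin n → ℝ), (2:ℕ) • ((X p).2 + fderiv ℝ G p (0, (X p).1))) := by
    ext i <;> simp [two_smul] <;> abel
  rw [this, Prod.smul_mk, half_two_smul, smul_zero]

lemma isOpen_slit (n : ℕ) : IsOpen (Slit n) :=
  isOpen_compl_singleton.preimage continuous_snd

lemma diffAt_of_slit {n : ℕ} {f : TB n → TB n} (hf : ContDiffOn ℝ (⊤ : ℕ∞) f (Slit n))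
    {p : TB n} (hp : p ∈ Slit n) : DifferentiableAt ℝ f p :=
  (hf.differentiableOn (by simp)).differentiableAt ((isOpen_slit n).mem_nhds hp)

lemma diffAt_G_of_slit {n : ℕ} {G : TB n → (Fin n → ℝ)} (hG : ContDiffOn ℝ (⊤ : ℕ∞) G (Slit n))
    {p : TB n} (hp : p ∈ Slit n) : DifferentiableAt ℝ G p :=
  (hG.differentiableOn (by simp)).differentiableAt ((isOpen_slit n).mem_nhds hp)

lemma contDiffOn_hopF {n : ℕ} {G : TB n → (Fin n → ℝ)} {X : TB n → TB n}
    (hG : ContDiffOn ℝ (⊤ : ℕ∞) G (Slit n)) (hX : ContDiffOn ℝ (⊤ : ℕ∞) X (Slit n)) :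
    ContDiffOn ℝ (⊤ : ℕ∞) (fun q : TB n => fderiv ℝ G q ((0 : Fin n → ℝ), (X q).1)) (Slit n) := by
  have h1 : ContDiffOn ℝ (⊤ : ℕ∞) (fderiv ℝ G) (Slit n) :=
    hG.fderiv_of_isOpen (isOpen_slit n) (by simp)
  have h2 : ContDiffOn ℝ (⊤ : ℕ∞) (fun q : TB n => ((0 : Fin n → ℝ), (X q).1)) (Slit n) :=
    contDiffOn_const.prodMk (contDiff_fst.comp_contDiffOn hX)
  exact h1.clm_apply h2

lemma diffAt_hop {n : ℕ} {G : TB n → (Fin n → ℝ)} {X : TB n → TB n}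
    (hG : ContDiffOn ℝ (⊤ : ℕ∞) G (Slit n)) (hX : ContDiffOn ℝ (⊤ : ℕ∞) X (Slit n))
    {p : TB n} (hp : p ∈ Slit n) : DifferentiableAt ℝ (hop (semispray G) X) p := by
  have hF : ContDiffOn ℝ (⊤ : ℕ∞)
      (fun q : TB n => ((X q).1, -(fderiv ℝ G q ((0 : Fin n → ℝ), (X q).1)))) (Slit n) :=
    (contDiff_fst.comp_contDiffOn hX).prodMk (contDiffOn_hopF hG hX).neg
  have heq : hop (semispray G) X =ᶠ[nhds p]
      fun q : TB n => ((X q).1, -(fderiv ℝ G q ((0 : Fin n → ℝ), (X q).1))) := by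
    filter_upwards [(isOpen_slit n).mem_nhds hp] with q hq
    exact hop_apply G X q (diffAt_G_of_slit hG hq) (diffAt_of_slit hX hq)
  exact heq.differentiableAt_iff.mpr
    ((hF.differentiableOn (by simp)).differentiableAt ((isOpen_slit n).mem_nhds hp))

lemma diffAt_vop {n : ℕ} {G : TB n → (Fin n → ℝ)} {X : TB n → TB n}
    (hG : ContDiffOn ℝ (⊤ : ℕ∞) G (Slit n)) (hX : ContDiffOn ℝ (⊤ : ℕ∞) X (Slit n))
    {p : TB n} (hp : p ∈ Slit n) : DifferentiableAt ℝ (vop (semispray G) X) p := by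
  have hF : ContDiffOn ℝ (⊤ : ℕ∞)
      (fun q : TB n => ((0 : Fin n → ℝ), (X q).2 + fderiv ℝ G q ((0 : Fin n → ℝ), (X q).1))) (Slit n) :=
    contDiffOn_const.prodMk ((contDiff_snd.comp_contDiffOn hX).add (contDiffOn_hopF hG hX))
  have heq : vop (semispray G) X =ᶠ[nhds p]
      fun q : TB n => ((0 : Fin n → ℝ), (X q).2 + fderiv ℝ G q ((0 : Fin n → ℝ), (X q).1)) := by
    filter_upwards [(isOpen_slit n).mem_nhds hp] with q hq
    exact vop_apply G X q (diffAt_G_of_slit hG hq) (diffAt_of_slit hX hq)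
  exact heq.differentiableAt_iff.mpr
    ((hF.differentiableOn (by simp)).differentiableAt ((isOpen_slit n).mem_nhds hp))

/-- For a semispray `S` (a vector field with `JS = C`, in coordinates
`S = yⁱ ∂/∂xⁱ − 2Gⁱ ∂/∂yⁱ`), the tensors `h = (1/2)(Id − L_S J)` and
`v = (1/2)(Id + L_S J)` are complementary projectors:
`h² = h`, `v² = v`, `h∘v = v∘h = 0`, and `h + v = Id`. -/
theorem horizontal_vertical_projectors (n : ℕ) (G : TB n → (Fin n → ℝ))
    (hG : ContDiffOn ℝ (⊤ : ℕ∞) G (Slit n)) :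
    ∀ X : TB n → TB n, ContDiffOn ℝ (⊤ : ℕ∞) X (Slit n) → ∀ p ∈ Slit n,
      hop (semispray G) (hop (semispray G) X) p = hop (semispray G) X p ∧
      vop (semispray G) (vop (semispray G) X) p = vop (semispray G) X p ∧
      hop (semispray G) (vop (semispray G) X) p = 0 ∧
      vop (semispray G) (hop (semispray G) X) p = 0 ∧
      hop (semispray G) X p + vop (semispray G) X p = X p := by
  intro X hX p hp
  have hGp := diffAt_G_of_slit hG hp
  have hXp := diffAt_of_slit hX hp
  have hh := diffAt_hop hG hX hp
  have hv := diffAt_vop hG hX hp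
  have hop_val := hop_apply G X p hGp hXp
  have vop_val := vop_apply G X p hGp hXp
  refine ⟨?_, ?_, ?_, ?_, ?_⟩
  · rw [hop_apply G _ p hGp hh, hop_val]
  · rw [vop_apply G _ p hGp hv, vop_val]
    simp
    exact (fderiv ℝ G p).map_zero
  · rw [hop_apply G _ p hGp hv, vop_val]
    simp [Prod.ext_iff]
    exact (fderiv ℝ G p).map_zero
  · rw [vop_apply G _ p hGp hh, hop_val]
    simp [Prod.ext_iff]
  · simp only [hop, vop, Pi.smul_apply, Pi.sub_apply, Pi.add_apply, ← smul_add]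
    rw [sub_add_add_cancel, ← two_smul ℝ (X p), smul_smul]
    norm_num

end
end

section
/- Let S be a semispray and define Ψ = h ∘ (L_S h) + v ∘ (L_S v). Then h ∘ Ψ − Ψ ∘ h = L_S h, J ∘ Ψ − Ψ ∘ J = L_S J, and consequently the dynamical covariant derivative ∇ = L_S + Ψ (acting on (1,1)-tensors by ∇A = L_S A + Ψ∘A − A∘Ψ) satisfies ∇h = 0, ∇v = 0, and ∇J = 0. -/
/- We work in induced coordinates on the tangent bundle `TM` of an `n`-dimensional
manifold: points of `TM` are pairs `p = (x, y) ∈ ℝⁿ × ℝⁿ`, the slit tangent bundle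
`TM \ {0}` is `{p | p.2 ≠ 0}`, vector fields are maps `X : ℝⁿ × ℝⁿ → ℝⁿ × ℝⁿ`
(components in the frame `∂/∂xⁱ, ∂/∂yⁱ`), and the canonical tangent structure acts
pointwise by `J(a,b) = (0,a)`. -/

noncomputable section

/-- The Lie derivative `L_S h`, acting by `(L_S h)X = [S,hX] − h[S,X]`. -/
def LSh {n : ℕ} (S X : TB n → TB n) : TB n → TB n := lie S (hop S X) - hop S (lie S X)

/-- The Lie derivative `L_S v`, acting by `(L_S v)X = [S,vX] − v[S,X]`. -/
def LSv {n : ℕ} (S X : TB n → TB n) : TB n → TB n := lie S (vop S X) - vop S (lie S X)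

/-- The almost complex structure `F = h ∘ (L_S h) − J` of a semispray `S`. -/
def Fop {n : ℕ} (S X : TB n → TB n) : TB n → TB n := hop S (LSh S X) - Jop X

/-- The curvature `R = (1/2)[h,h]`, the Nijenhuis tensor of the horizontal projector:
`R(X,Y) = [hX,hY] + h(h[X,Y]) − h[X,hY] − h[hX,Y]`. -/
def Rop {n : ℕ} (S X Y : TB n → TB n) : TB n → TB n :=
  lie (hop S X) (hop S Y) + hop S (hop S (lie X Y))
    - hop S (lie X (hop S Y)) - hop S (lie (hop S X) Y)

/-- The Jacobi endomorphism `Φ = v ∘ (L_S h)`. -/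
def Phiop {n : ℕ} (S X : TB n → TB n) : TB n → TB n := vop S (LSh S X)

/-- The tensor `Ψ = h ∘ (L_S h) + v ∘ (L_S v)`. -/
def Psiop {n : ℕ} (S X : TB n → TB n) : TB n → TB n := hop S (LSh S X) + vop S (LSv S X)

/-! ### Auxiliary lemmas -/

open Filter Topology

namespace DynCov

variable {n : ℕ} {G : TB n → (Fin n → ℝ)}

lemma isOpen_slit : IsOpen (Slit n) :=
  isOpen_compl_singleton.preimage continuous_snd

lemma slit_mem_nhds {p : TB n} (hp : p ∈ Slit n) : Slit n ∈ 𝓝 p :=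
  isOpen_slit.mem_nhds hp

lemma diffAt {F : Type*} [NormedAddCommGroup F] [NormedSpace ℝ F] {f : TB n → F}
    (hf : ContDiffOn ℝ (⊤ : ℕ∞) f (Slit n)) {p : TB n} (hp : p ∈ Slit n) :
    DifferentiableAt ℝ f p :=
  (hf.differentiableOn (by simp)).differentiableAt (slit_mem_nhds hp)

lemma cd_lie {X Y : TB n → TB n} (hX : ContDiffOn ℝ (⊤ : ℕ∞) X (Slit n))
    (hY : ContDiffOn ℝ (⊤ : ℕ∞) Y (Slit n)) : ContDiffOn ℝ (⊤ : ℕ∞) (lie X Y) (Slit n) := by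
  have h1 : ContDiffOn ℝ (⊤ : ℕ∞) (fderiv ℝ Y) (Slit n) :=
    hY.fderiv_of_isOpen isOpen_slit (by simp)
  have h2 : ContDiffOn ℝ (⊤ : ℕ∞) (fderiv ℝ X) (Slit n) :=
    hX.fderiv_of_isOpen isOpen_slit (by simp)
  exact (h1.clm_apply hX).sub (h2.clm_apply hY)

lemma cd_Jop {X : TB n → TB n} (hX : ContDiffOn ℝ (⊤ : ℕ∞) X (Slit n)) :
    ContDiffOn ℝ (⊤ : ℕ∞) (Jop X) (Slit n) :=
  contDiffOn_const.prodMk hX.fst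

lemma cd_semispray (hG : ContDiffOn ℝ (⊤ : ℕ∞) G (Slit n)) :
    ContDiffOn ℝ (⊤ : ℕ∞) (semispray G) (Slit n) :=
  (contDiff_snd.contDiffOn).prodMk ((hG.const_smul (2 : ℕ)).neg)

lemma cd_LSJ (hG : ContDiffOn ℝ (⊤ : ℕ∞) G (Slit n)) {X : TB n → TB n}
    (hX : ContDiffOn ℝ (⊤ : ℕ∞) X (Slit n)) : ContDiffOn ℝ (⊤ : ℕ∞) (LSJ (semispray G) X) (Slit n) :=
  (cd_lie (cd_semispray hG) (cd_Jop hX)).sub (cd_Jop (cd_lie (cd_semispray hG) hX))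

lemma cd_hop (hG : ContDiffOn ℝ (⊤ : ℕ∞) G (Slit n)) {X : TB n → TB n}
    (hX : ContDiffOn ℝ (⊤ : ℕ∞) X (Slit n)) : ContDiffOn ℝ (⊤ : ℕ∞) (hop (semispray G) X) (Slit n) := by
  unfold hop
  exact ContDiffOn.const_smul ((1:ℝ)/2) (hX.sub (cd_LSJ hG hX))

lemma cd_vop (hG : ContDiffOn ℝ (⊤ : ℕ∞) G (Slit n)) {X : TB n → TB n}
    (hX : ContDiffOn ℝ (⊤ : ℕ∞) X (Slit n)) : ContDiffOn ℝ (⊤ : ℕ∞) (vop (semispray G) X) (Slit n) := by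
  unfold vop
  exact ContDiffOn.const_smul ((1:ℝ)/2) (hX.add (cd_LSJ hG hX))

lemma cd_LSh (hG : ContDiffOn ℝ (⊤ : ℕ∞) G (Slit n)) {X : TB n → TB n}
    (hX : ContDiffOn ℝ (⊤ : ℕ∞) X (Slit n)) : ContDiffOn ℝ (⊤ : ℕ∞) (LSh (semispray G) X) (Slit n) :=
  (cd_lie (cd_semispray hG) (cd_hop hG hX)).sub (cd_hop hG (cd_lie (cd_semispray hG) hX))

lemma cd_LSv (hG : ContDiffOn ℝ (⊤ : ℕ∞) G (Slit n)) {X : TB n → TB n}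
    (hX : ContDiffOn ℝ (⊤ : ℕ∞) X (Slit n)) : ContDiffOn ℝ (⊤ : ℕ∞) (LSv (semispray G) X) (Slit n) :=
  (cd_lie (cd_semispray hG) (cd_vop hG hX)).sub (cd_vop hG (cd_lie (cd_semispray hG) hX))

lemma cd_Psiop (hG : ContDiffOn ℝ (⊤ : ℕ∞) G (Slit n)) {X : TB n → TB n}
    (hX : ContDiffOn ℝ (⊤ : ℕ∞) X (Slit n)) : ContDiffOn ℝ (⊤ : ℕ∞) (Psiop (semispray G) X) (Slit n) :=
  (cd_hop hG (cd_LSh hG hX)).add (cd_vop hG (cd_LSv hG hX))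

/-! #### Pointwise derivative computations -/

lemma semispray_hasFDerivAt {p : TB n} (hGd : DifferentiableAt ℝ G p) :
    HasFDerivAt (semispray G)
      ((ContinuousLinearMap.snd ℝ (Fin n → ℝ) (Fin n → ℝ)).prod (-(2 • fderiv ℝ G p))) p :=
  (hasFDerivAt_snd).prodMk ((hGd.hasFDerivAt.const_smul (2 : ℕ)).neg)

lemma Jop_hasFDerivAt {X : TB n → TB n} {p : TB n} (hXd : DifferentiableAt ℝ X p) :
    HasFDerivAt (Jop X)
      ((0 : TB n →L[ℝ] (Fin n → ℝ)).prod
        ((ContinuousLinearMap.fst ℝ (Fin n → ℝ) (Fin n → ℝ)).comp (fderiv ℝ X p))) p :=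
  (hasFDerivAt_const 0 p).prodMk hXd.hasFDerivAt.fst

lemma fderivG_neg (p : TB n) (a : Fin n → ℝ) :
    fderiv ℝ G p ((0 : Fin n → ℝ), -a) = -fderiv ℝ G p (0, a) := by
  rw [show ((0 : Fin n → ℝ), -a) = -((0 : Fin n → ℝ), a) by rw [Prod.neg_mk, neg_zero],
    map_neg]

lemma fderivG_sub (p : TB n) (a b : Fin n → ℝ) :
    fderiv ℝ G p ((0 : Fin n → ℝ), a - b)
      = fderiv ℝ G p (0, a) - fderiv ℝ G p (0, b) := by
  rw [show ((0 : Fin n → ℝ), a - b) = ((0 : Fin n → ℝ), a) - ((0 : Fin n → ℝ), b) by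
    rw [Prod.mk_sub_mk, sub_zero], map_sub]

lemma fderivG_zero (p : TB n) :
    fderiv ℝ G p ((0 : Fin n → ℝ), (0 : Fin n → ℝ)) = 0 := by
  rw [Prod.mk_zero_zero, map_zero]

lemma LSJ_apply {X : TB n → TB n} {p : TB n} (hGd : DifferentiableAt ℝ G p)
    (hXd : DifferentiableAt ℝ X p) :
    LSJ (semispray G) X p
      = (-(X p).1, (X p).2 + fderiv ℝ G p (0, (X p).1) + fderiv ℝ G p (0, (X p).1)) := by
  have hS := (semispray_hasFDerivAt hGd).fderiv
  have hJ := (Jop_hasFDerivAt hXd).fderiv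
  have e1 : lie (semispray G) (Jop X) p
      = ((0 : Fin n → ℝ), (fderiv ℝ X p (semispray G p)).1)
        - ((X p).1, -(2 • fderiv ℝ G p ((0 : Fin n → ℝ), (X p).1))) := by
    show fderiv ℝ (Jop X) p (semispray G p) - fderiv ℝ (semispray G) p (Jop X p) = _
    rw [hS, hJ]
    rfl
  have e2 : Jop (lie (semispray G) X) p
      = ((0 : Fin n → ℝ), (fderiv ℝ X p (semispray G p)).1 - (X p).2) := by
    show ((0 : Fin n → ℝ), (lie (semispray G) X p).1) = _
    have : (lie (semispray G) X p).1 = (fderiv ℝ X p (semispray G p)).1 - (X p).2 := by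
      show (fderiv ℝ X p (semispray G p) - fderiv ℝ (semispray G) p (X p)).1 = _
      rw [Prod.fst_sub, hS]
      rfl
    rw [this]
  show lie (semispray G) (Jop X) p - Jop (lie (semispray G) X) p = _
  rw [e1, e2]
  rw [Prod.mk_sub_mk, Prod.mk_sub_mk, Prod.mk.injEq]
  constructor
  · abel_nf
  · abel_nf
    simp only [neg_smul, one_smul]
    abel

lemma hop_apply {X : TB n → TB n} {p : TB n} (hGd : DifferentiableAt ℝ G p)
    (hXd : DifferentiableAt ℝ X p) :
    hop (semispray G) X p = ((X p).1, -fderiv ℝ G p (0, (X p).1)) := by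
  show (1/2 : ℝ) • (X p - LSJ (semispray G) X p) = _
  rw [LSJ_apply hGd hXd, Prod.ext_iff]
  refine ⟨?_, ?_⟩
  · show (1/2:ℝ) • ((X p).1 - -(X p).1) = (X p).1
    module
  · show (1/2:ℝ) • ((X p).2 - ((X p).2 + fderiv ℝ G p (0, (X p).1) + fderiv ℝ G p (0, (X p).1)))
        = -fderiv ℝ G p (0, (X p).1)
    module

lemma vop_apply {X : TB n → TB n} {p : TB n} (hGd : DifferentiableAt ℝ G p)
    (hXd : DifferentiableAt ℝ X p) :
    vop (semispray G) X p = (0, (X p).2 + fderiv ℝ G p (0, (X p).1)) := by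
  show (1/2 : ℝ) • (X p + LSJ (semispray G) X p) = _
  rw [LSJ_apply hGd hXd, Prod.ext_iff]
  refine ⟨?_, ?_⟩
  · show (1/2:ℝ) • ((X p).1 + -(X p).1) = (0 : Fin n → ℝ)
    module
  · show (1/2:ℝ) • ((X p).2 + ((X p).2 + fderiv ℝ G p (0, (X p).1) + fderiv ℝ G p (0, (X p).1)))
        = (X p).2 + fderiv ℝ G p (0, (X p).1)
    module

lemma vop_eq_sub (S X : TB n → TB n) : vop S X = X - hop S X := by
  funext p
  show (1/2 : ℝ) • (X p + LSJ S X p) = X p - (1/2 : ℝ) • (X p - LSJ S X p)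
  module

lemma lie_congr {S Y Z : TB n → TB n} {p : TB n} (h : Y =ᶠ[𝓝 p] Z) :
    lie S Y p = lie S Z p := by
  unfold lie
  rw [h.fderiv_eq, h.eq_of_nhds]

lemma lie_zero (S : TB n → TB n) (p : TB n) : lie S (fun _ => (0 : TB n)) p = 0 := by
  unfold lie
  simp

lemma lie_sub {S Y Z : TB n → TB n} {p : TB n} (hY : DifferentiableAt ℝ Y p)
    (hZ : DifferentiableAt ℝ Z p) : lie S (Y - Z) p = lie S Y p - lie S Z p := by
  unfold lie
  have h1 : fderiv ℝ (Y - Z) p = fderiv ℝ Y p - fderiv ℝ Z p := fderiv_sub hY hZ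
  have h2 : (Y - Z) p = Y p - Z p := rfl
  rw [h1, h2, map_sub]
  simp only [ContinuousLinearMap.sub_apply]
  abel

lemma lie_fst {Y : TB n → TB n} {p : TB n} (hGd : DifferentiableAt ℝ G p) :
    (lie (semispray G) Y p).1 = (fderiv ℝ Y p (semispray G p)).1 - (Y p).2 := by
  show (fderiv ℝ Y p (semispray G p) - fderiv ℝ (semispray G) p (Y p)).1 = _
  rw [Prod.fst_sub, (semispray_hasFDerivAt hGd).fderiv]
  rfl

lemma LSv_eq_neg {X : TB n → TB n} {p : TB n} (hXd : DifferentiableAt ℝ X p)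
    (hhXd : DifferentiableAt ℝ (hop (semispray G) X) p) :
    LSv (semispray G) X p = -(LSh (semispray G) X p) := by
  have h1 : lie (semispray G) (vop (semispray G) X) p
      = lie (semispray G) X p - lie (semispray G) (hop (semispray G) X) p := by
    rw [vop_eq_sub]
    exact lie_sub hXd hhXd
  show lie (semispray G) (vop (semispray G) X) p - vop (semispray G) (lie (semispray G) X) p
      = -(lie (semispray G) (hop (semispray G) X) p - hop (semispray G) (lie (semispray G) X) p)
  rw [h1, vop_eq_sub]
  show _ - (lie (semispray G) X p - hop (semispray G) (lie (semispray G) X) p) = _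
  abel

lemma Psi_val (hG : ContDiffOn ℝ (⊤ : ℕ∞) G (Slit n)) {X : TB n → TB n}
    (hX : ContDiffOn ℝ (⊤ : ℕ∞) X (Slit n)) {p : TB n} (hp : p ∈ Slit n) :
    Psiop (semispray G) X p
      = ((LSh (semispray G) X p).1,
         -(LSh (semispray G) X p).2
           - fderiv ℝ G p (0, (LSh (semispray G) X p).1)
           - fderiv ℝ G p (0, (LSh (semispray G) X p).1)) := by
  have hGd := diffAt hG hp
  have dLSh := diffAt (cd_LSh hG hX) hp
  have dLSv := diffAt (cd_LSv hG hX) hp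
  have e := LSv_eq_neg (G := G) (diffAt hX hp) (diffAt (cd_hop hG hX) hp)
  show hop (semispray G) (LSh (semispray G) X) p + vop (semispray G) (LSv (semispray G) X) p = _
  rw [hop_apply hGd dLSh, vop_apply hGd dLSv, e]
  simp only [Prod.fst_neg, Prod.snd_neg, fderivG_neg, Prod.mk_add_mk, Prod.mk.injEq]
  constructor <;> abel

end DynCov

open DynCov Filter Topology in
/-- For a semispray `S` with `Ψ = h ∘ (L_S h) + v ∘ (L_S v)`:
`h∘Ψ − Ψ∘h = L_S h`, `J∘Ψ − Ψ∘J = L_S J`, and consequently the dynamical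
covariant derivative `∇ = L_S + Ψ` (acting on a (1,1)-tensor `A` by
`∇A = L_S A + Ψ∘A − A∘Ψ`) satisfies `∇h = 0`, `∇v = 0`, `∇J = 0`. -/
theorem dynamical_covariant_derivative_parallel (n : ℕ) (G : TB n → (Fin n → ℝ))
    (hG : ContDiffOn ℝ (⊤ : ℕ∞) G (Slit n)) :
    ∀ X : TB n → TB n, ContDiffOn ℝ (⊤ : ℕ∞) X (Slit n) → ∀ p ∈ Slit n,
      hop (semispray G) (Psiop (semispray G) X) p
          - Psiop (semispray G) (hop (semispray G) X) p = LSh (semispray G) X p ∧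
      Jop (Psiop (semispray G) X) p - Psiop (semispray G) (Jop X) p
          = LSJ (semispray G) X p ∧
      LSh (semispray G) X p + Psiop (semispray G) (hop (semispray G) X) p
          - hop (semispray G) (Psiop (semispray G) X) p = 0 ∧
      LSv (semispray G) X p + Psiop (semispray G) (vop (semispray G) X) p
          - vop (semispray G) (Psiop (semispray G) X) p = 0 ∧
      LSJ (semispray G) X p + Psiop (semispray G) (Jop X) p
          - Jop (Psiop (semispray G) X) p = 0 := by
  intro X hX p hp
  have hGd : DifferentiableAt ℝ G p := diffAt hG hp
  have cdS := cd_semispray hG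
  have cdhX := cd_hop hG hX
  have cdvX := cd_vop hG hX
  have cdJX := cd_Jop hX
  have cdlieX := cd_lie cdS hX
  have cdliehX := cd_lie cdS cdhX
  have cdlieJX := cd_lie cdS cdJX
  have cdlievX := cd_lie cdS cdvX
  have cdPsiX := cd_Psiop hG hX
  have hXd := diffAt hX hp
  have hhXd := diffAt cdhX hp
  have dlieX := diffAt cdlieX hp
  have dliehX := diffAt cdliehX hp
  have dlieJX := diffAt cdlieJX hp
  have dlievX := diffAt cdlievX hp
  have dPsiX := diffAt cdPsiX hp
  -- eventual equalities on the slit bundle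
  have ehh : hop (semispray G) (hop (semispray G) X) =ᶠ[𝓝 p] hop (semispray G) X := by
    refine Filter.eventuallyEq_of_mem (slit_mem_nhds hp) fun q hq => ?_
    rw [hop_apply (diffAt hG hq) (diffAt cdhX hq), hop_apply (diffAt hG hq) (diffAt hX hq)]
  have ehJ : hop (semispray G) (Jop X) =ᶠ[𝓝 p] (fun _ => (0 : TB n)) := by
    refine Filter.eventuallyEq_of_mem (slit_mem_nhds hp) fun q hq => ?_
    rw [hop_apply (diffAt hG hq) (diffAt cdJX hq)]
    show ((0 : Fin n → ℝ), -fderiv ℝ G q ((0 : Fin n → ℝ), (0 : Fin n → ℝ))) = _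
    rw [fderivG_zero, neg_zero, Prod.mk_zero_zero]
  have ehv : hop (semispray G) (vop (semispray G) X) =ᶠ[𝓝 p] (fun _ => (0 : TB n)) := by
    refine Filter.eventuallyEq_of_mem (slit_mem_nhds hp) fun q hq => ?_
    rw [hop_apply (diffAt hG hq) (diffAt cdvX hq), vop_apply (diffAt hG hq) (diffAt hX hq)]
    show ((0 : Fin n → ℝ), -fderiv ℝ G q ((0 : Fin n → ℝ), (0 : Fin n → ℝ))) = _
    rw [fderivG_zero, neg_zero, Prod.mk_zero_zero]
  -- scalar component facts
  have sf1 : (lie (semispray G) X p).1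
      = (fderiv ℝ X p (semispray G p)).1 - (X p).2 := lie_fst hGd
  have sf2 : (lie (semispray G) (hop (semispray G) X) p).1
      = (fderiv ℝ X p (semispray G p)).1 + fderiv ℝ G p (0, (X p).1) := by
    rw [lie_fst hGd, hop_apply hGd hXd]
    have efst : (fun q => (hop (semispray G) X q).1) =ᶠ[𝓝 p] (fun q => (X q).1) := by
      refine Filter.eventuallyEq_of_mem (slit_mem_nhds hp) fun q hq => ?_
      rw [hop_apply (diffAt hG hq) (diffAt hX hq)]
    have t1 : (fderiv ℝ (hop (semispray G) X) p (semispray G p)).1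
        = (fderiv ℝ X p (semispray G p)).1 := by
      have e1 := (hhXd.hasFDerivAt.fst).fderiv
      have e2 := (hXd.hasFDerivAt.fst).fderiv
      have : fderiv ℝ (fun q => (hop (semispray G) X q).1) p
          = fderiv ℝ (fun q => (X q).1) p := efst.fderiv_eq
      calc (fderiv ℝ (hop (semispray G) X) p (semispray G p)).1
          = fderiv ℝ (fun q => (hop (semispray G) X q).1) p (semispray G p) := by
            rw [e1]; rfl
        _ = fderiv ℝ (fun q => (X q).1) p (semispray G p) := by rw [this]
        _ = (fderiv ℝ X p (semispray G p)).1 := by rw [e2]; rfl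
    rw [t1]
    show (fderiv ℝ X p (semispray G p)).1 - -fderiv ℝ G p (0, (X p).1) = _
    rw [sub_neg_eq_add]
  have sf3 : (lie (semispray G) (Jop X) p).1 = -(X p).1 := by
    rw [lie_fst hGd, (Jop_hasFDerivAt hXd).fderiv]
    show (0 : TB n →L[ℝ] (Fin n → ℝ)) (semispray G p) - (X p).1 = _
    rw [ContinuousLinearMap.zero_apply, zero_sub]
  -- value of `L_S h` at `X`
  have hv1 : LSh (semispray G) X p
      = ((lie (semispray G) (hop (semispray G) X) p).1 - (lie (semispray G) X p).1,
         (lie (semispray G) (hop (semispray G) X) p).2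
           + fderiv ℝ G p (0, (lie (semispray G) X p).1)) := by
    show lie (semispray G) (hop (semispray G) X) p
        - hop (semispray G) (lie (semispray G) X) p = _
    rw [hop_apply hGd dlieX, Prod.ext_iff]
    constructor <;> simp [Prod.fst_sub, Prod.snd_sub, sub_neg_eq_add]
  -- value of `L_S h` at `hX`
  have hv2 : LSh (semispray G) (hop (semispray G) X) p
      = ((0 : Fin n → ℝ),
         (lie (semispray G) (hop (semispray G) X) p).2
           + fderiv ℝ G p (0, (lie (semispray G) (hop (semispray G) X) p).1)) := by
    show lie (semispray G) (hop (semispray G) (hop (semispray G) X)) p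
        - hop (semispray G) (lie (semispray G) (hop (semispray G) X)) p = _
    rw [lie_congr ehh, hop_apply hGd dliehX, Prod.ext_iff]
    constructor <;> simp [Prod.fst_sub, Prod.snd_sub, sub_neg_eq_add]
  -- value of `L_S h` at `JX`
  have hv3 : LSh (semispray G) (Jop X) p
      = (-(lie (semispray G) (Jop X) p).1,
         fderiv ℝ G p (0, (lie (semispray G) (Jop X) p).1)) := by
    show lie (semispray G) (hop (semispray G) (Jop X)) p
        - hop (semispray G) (lie (semispray G) (Jop X)) p = _
    rw [lie_congr ehJ, lie_zero, hop_apply hGd dlieJX, Prod.ext_iff]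
    constructor <;> simp [Prod.fst_sub, Prod.snd_sub]
  have hv4 : lie (semispray G) (vop (semispray G) X) p
      = lie (semispray G) X p - lie (semispray G) (hop (semispray G) X) p := by
    rw [vop_eq_sub]
    exact lie_sub hXd hhXd
  -- value of `L_S h` at `vX`
  have hv5 : LSh (semispray G) (vop (semispray G) X) p
      = (-((lie (semispray G) X p).1 - (lie (semispray G) (hop (semispray G) X) p).1),
         fderiv ℝ G p (0, (lie (semispray G) X p).1
           - (lie (semispray G) (hop (semispray G) X) p).1)) := by
    show lie (semispray G) (hop (semispray G) (vop (semispray G) X)) p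
        - hop (semispray G) (lie (semispray G) (vop (semispray G) X)) p = _
    rw [lie_congr ehv, lie_zero, hop_apply hGd dlievX, hv4, Prod.ext_iff]
    constructor <;> simp [Prod.fst_sub, Prod.snd_sub]
  -- the first two claims
  have c1 : hop (semispray G) (Psiop (semispray G) X) p
      - Psiop (semispray G) (hop (semispray G) X) p = LSh (semispray G) X p := by
    rw [hop_apply hGd dPsiX, Psi_val hG hX hp, Psi_val hG cdhX hp, hv1, hv2, Prod.ext_iff]
    constructor <;>
      · simp [Prod.fst_sub, Prod.snd_sub, Prod.fst_add, Prod.snd_add, Prod.fst_neg,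
          Prod.snd_neg, fderivG_sub, fderivG_neg, fderivG_zero]
        try abel
  have c2 : Jop (Psiop (semispray G) X) p - Psiop (semispray G) (Jop X) p
      = LSJ (semispray G) X p := by
    show ((0 : Fin n → ℝ), (Psiop (semispray G) X p).1)
        - Psiop (semispray G) (Jop X) p = _
    rw [Psi_val hG hX hp, Psi_val hG cdJX hp, hv1, hv3, LSJ_apply hGd hXd, Prod.ext_iff]
    constructor <;>
      · simp [Prod.fst_sub, Prod.snd_sub, Prod.fst_add, Prod.snd_add, Prod.fst_neg,
          Prod.snd_neg, sf1, sf2, sf3, fderivG_sub, fderivG_neg, fderivG_zero]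
        try abel
  have c4 : LSv (semispray G) X p + Psiop (semispray G) (vop (semispray G) X) p
      - vop (semispray G) (Psiop (semispray G) X) p = 0 := by
    rw [LSv_eq_neg hXd hhXd, Psi_val hG cdvX hp, hv5, vop_apply hGd dPsiX,
      Psi_val hG hX hp, hv1, Prod.ext_iff]
    constructor <;>
      · simp [Prod.fst_sub, Prod.snd_sub, Prod.fst_add, Prod.snd_add, Prod.fst_neg,
          Prod.snd_neg, fderivG_sub, fderivG_neg, fderivG_zero]
        try abel
  refine ⟨c1, c2, ?_, c4, ?_⟩
  · rw [← c1]
    abel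
  · rw [← c2]
    abel

end
end
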